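/- arXiv:1207.3034 — 8 statements merged into one kernel-verified Lean document; each statement's English description precedes it below -/
import Mathlib

section
/- Let n ≥ 1 be an integer and z ≥ 1 a real number, and let p = ((z+1)/2, 0, …, 0, (1−z)/2) ∈ ℝ^{n+1}. Then the convex hull of all points obtained from p by permuting its coordinates equals the Minkowski sum ((z+1)/2)·S + ((z−1)/2)·S′, where S is the convex hull of the standard basis vectors e_1, …, e_{n+1} of ℝ^{n+1} and S′ = −S is the convex hull of −e_1, …, −e_{n+1}. -/
/-!
The orbit of `p = a e_{i₀} - b e_{j₀}` (with `i₀ ≠ j₀`) under coordinate permutations is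
`{a e_i - b e_j | i ≠ j}`, while `a • S + b • S'` is the convex hull of all `a e_i - b e_j`.
The only additional points, `(a - b) e_i`, are the convex combination
`a/(a+b) (a e_i - b e_j) + b/(a+b) (a e_j - b e_i)` of two orbit points.
-/

open Pointwise Set

theorem Equiv.Perm.exists_apply_eq_and_apply_eq {ι : Type*} {i j i' j' : ι} (h : i ≠ j)
    (h' : i' ≠ j') : ∃ σ : Equiv.Perm ι, σ i = i' ∧ σ j = j' :=
  MulAction.is_two_pretransitive_iff.mp (Equiv.Perm.isMultiplyPretransitive ι 2) h h'

section Ring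

variable {R ι : Type*} [Ring R] [DecidableEq ι]

theorem smul_single_add_smul_neg_single_comp (a b : R) (i j : ι) (σ : Equiv.Perm ι) :
    (a • Pi.single i 1 + b • -Pi.single j 1 : ι → R) ∘ σ =
      a • Pi.single (σ.symm i) 1 + b • -Pi.single (σ.symm j) 1 := by
  simp only [Pi.add_comp, Pi.smul_comp, Pi.neg_comp, Pi.single_comp_equiv]

theorem setOf_comp_perm_eq {i₀ j₀ : ι} (h : i₀ ≠ j₀) (a b : R) :
    {x | ∃ σ : Equiv.Perm ι, x = (a • Pi.single i₀ 1 + b • -Pi.single j₀ 1 : ι → R) ∘ σ} =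
      {x | ∃ i j, i ≠ j ∧ x = a • Pi.single i 1 + b • -Pi.single j 1} := by
  ext x
  simp only [smul_single_add_smul_neg_single_comp, mem_ofPred_eq]
  constructor
  · rintro ⟨σ, rfl⟩
    exact ⟨σ.symm i₀, σ.symm j₀, σ.symm.injective.ne h, rfl⟩
  · rintro ⟨i, j, hij, rfl⟩
    obtain ⟨σ, hi, hj⟩ := Equiv.Perm.exists_apply_eq_and_apply_eq hij h
    exact ⟨σ, by rw [← hi, ← hj, σ.symm_apply_apply, σ.symm_apply_apply]⟩

end Ring

section LinearOrderedField

variable {𝕜 ι : Type*} [Field 𝕜] [LinearOrder 𝕜] [IsStrictOrderedRing 𝕜] [DecidableEq ι]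

theorem smul_single_add_smul_neg_single_mem_segment {a b : 𝕜} (ha : 0 < a) (hb : 0 ≤ b)
    (i j : ι) :
    (a • Pi.single i 1 + b • -Pi.single i 1 : ι → 𝕜) ∈
      segment 𝕜 (a • Pi.single i 1 + b • -Pi.single j 1)
        (a • Pi.single j 1 + b • -Pi.single i 1) := by
  have hab : 0 < a + b := by positivity
  refine ⟨a / (a + b), b / (a + b), by positivity, by positivity, by field_simp, ?_⟩
  match_scalars <;> field_simp <;> ring

theorem convexHull_setOf_comp_perm {i₀ j₀ : ι} (h : i₀ ≠ j₀) {a b : 𝕜} (ha : 0 < a)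
    (hb : 0 ≤ b) :
    convexHull 𝕜
        {x | ∃ σ : Equiv.Perm ι, x = (a • Pi.single i₀ 1 + b • -Pi.single j₀ 1 : ι → 𝕜) ∘ σ} =
      a • convexHull 𝕜 (range fun i => Pi.single i 1) +
        b • convexHull 𝕜 (range fun i => -Pi.single i 1) := by
  have : Nontrivial ι := ⟨⟨i₀, j₀, h⟩⟩
  rw [setOf_comp_perm_eq h, ← convexHull_smul, ← convexHull_smul, ← convexHull_add]
  refine (convexHull_mono ?_).antisymm (convexHull_min ?_ (convex_convexHull 𝕜 _))
  · rintro _ ⟨i, j, -, rfl⟩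
    exact add_mem_add (smul_mem_smul_set (mem_range_self i)) (smul_mem_smul_set (mem_range_self j))
  · rintro _ ⟨_, ⟨_, ⟨i, rfl⟩, rfl⟩, _, ⟨_, ⟨j, rfl⟩, rfl⟩, rfl⟩
    obtain rfl | hij := eq_or_ne i j
    · obtain ⟨k, hk⟩ := exists_ne i
      refine segment_subset_convexHull ?_ ?_ (smul_single_add_smul_neg_single_mem_segment ha hb i k)
      exacts [⟨i, k, hk.symm, rfl⟩, ⟨k, i, hk, rfl⟩]
    · exact subset_convexHull 𝕜 _ ⟨i, j, hij, rfl⟩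

end LinearOrderedField

/-- The degenerate permutohedron with vertex `((z+1)/2, 0, …, 0, (1−z)/2)` is
the Minkowski sum `((z+1)/2)·S + ((z−1)/2)·S′` where `S = conv{e_1,…,e_{n+1}}`
and `S′ = conv{−e_1,…,−e_{n+1}}`. -/
theorem stmt_1 (n : ℕ) (hn : 1 ≤ n) (z : ℝ) (hz : 1 ≤ z)
    (p : Fin (n + 1) → ℝ)
    (hp : p = fun i => if i = 0 then (z + 1) / 2
      else if i = Fin.last n then (1 - z) / 2 else 0)
    (S S' : Set (Fin (n + 1) → ℝ))
    (hS : S = convexHull ℝ (Set.range fun i : Fin (n + 1) => Pi.single i (1 : ℝ)))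
    (hS' : S' = convexHull ℝ (Set.range fun i : Fin (n + 1) => -Pi.single i (1 : ℝ))) :
    convexHull ℝ {x | ∃ σ : Equiv.Perm (Fin (n + 1)), x = p ∘ σ}
      = ((z + 1) / 2) • S + ((z - 1) / 2) • S' := by
  have h0 : (0 : Fin (n + 1)) ≠ Fin.last n := by
    rw [Ne, Fin.ext_iff, Fin.val_zero, Fin.val_last]; omega
  have hp_eq : p = ((z + 1) / 2) • Pi.single 0 1 + ((z - 1) / 2) • -Pi.single (Fin.last n) 1 := by
    subst hp
    funext k
    obtain rfl | hk0 := eq_or_ne k 0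
    · simp [h0]
    obtain rfl | hkl := eq_or_ne k (Fin.last n)
    · simp [h0.symm]; ring
    · simp [hk0, hkl]
  subst hS hS'
  rw [hp_eq]
  exact convexHull_setOf_comp_perm h0 (by linarith) (by linarith)
end

section
/- Let d ≥ 2 and let V be any nonempty subset of the set {e_i + e_j − e_k : i, j, k ∈ {1,…,d}, k ≠ i, k ≠ j} ∪ {e_r : r ∈ {1,…,d}} ⊂ ℝ^d. Then the normalized volume of the convex hull of V, i.e. (d−1)! times the Lebesgue measure of the image of conv(V) under the projection ℝ^d → ℝ^{d−1} forgetting the last coordinate, satisfies (d−1)!·vol ≤ P_{d−1}(3) < 6^{d−1}, where P_n is the n-th Legendre polynomial. -/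
open MeasureTheory

/-- The `n`-th Legendre polynomial at `z`, via the Rodrigues formula. -/
noncomputable def legendre (n : ℕ) (z : ℝ) : ℝ :=
  iteratedDeriv n (fun t : ℝ => (t ^ 2 - 1) ^ n) z / (2 ^ n * n.factorial)

/-!
The points `e_i + e_j - e_k` and `e_r` lie in the convex body
`K_d(a, b) = posNegBody (Fin d) a b = {y | ∑ yᵢ⁻ ≤ a, ∑ yᵢ⁺ ≤ b}` with `(a, b) = (1, 2)`, and forgetting coordinates
maps `K_d` into `K_{d-1}`, so the projected hull lies in `K_{d-1}(1, 2)`. Slicing `K_{n+1}(a, b)`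
at a value `t` of one coordinate leaves `K_n(a - t⁻, b - t⁺)`, whence by induction
`vol K_n(a, b) = ∑_{i+j=n} C(n,i) (aⁱ/i!) (bʲ/j!)`: on each orthant with `i` negative
coordinates `K_n` is a product of two simplices. At `(1, 2)`, `n!` times this is
`∑ C(n,i)² 2ʲ`, which is also `P_n(3)` by Leibniz's rule for `(t - 1)ⁿ (t + 1)ⁿ` in Rodrigues'
formula, and it is less than `2ⁿ ∑ C(n,i) 2ʲ = 6ⁿ`.
-/

open Finset Polynomial
open scoped Nat

theorem iteratedDeriv_polynomial_eval (p : ℝ[X]) (n : ℕ) (x : ℝ) :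
    iteratedDeriv n (fun t => p.eval t) x = (derivative^[n] p).eval x := by
  induction n generalizing p with
  | zero => simp
  | succ n ih =>
    have hderiv : deriv (fun t => p.eval t) = fun t => (derivative p).eval t :=
      funext fun t => Polynomial.deriv p
    rw [iteratedDeriv_succ', hderiv, ih, Function.iterate_succ_apply]

theorem legendre_three_eq_sum (n : ℕ) :
    legendre n 3 = ∑ p ∈ antidiagonal n, (n.choose p.1 : ℝ) ^ 2 * 2 ^ p.2 := by
  have hpoly : (fun t : ℝ => (t ^ 2 - 1) ^ n) =
      fun t => ((X - C 1) ^ n * (X + C 1) ^ n : ℝ[X]).eval t := by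
    funext t
    simp only [map_one, ← mul_pow, eval_pow, eval_mul, eval_sub, eval_X, eval_one, eval_add]
    ring
  rw [legendre, hpoly, iteratedDeriv_polynomial_eval, iterate_derivative_mul, eval_finsetSum,
    Nat.sum_antidiagonal_eq_sum_range_succ (fun i j => (n.choose i : ℝ) ^ 2 * 2 ^ j),
    div_eq_iff (by positivity), sum_mul]
  refine sum_congr rfl fun k hk => ?_
  have hkn : k ≤ n := Nat.lt_succ_iff.mp (mem_range.mp hk)
  have hfac : (n.choose k : ℝ) * k ! * (n - k)! = n ! := by
    exact_mod_cast Nat.choose_mul_factorial_mul_factorial hkn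
  have hpow : (2 : ℝ) ^ k * 4 ^ (n - k) = 2 ^ n * 2 ^ (n - k) := by
    rw [show (4 : ℝ) = 2 * 2 by norm_num, mul_pow, ← mul_assoc, ← pow_add,
      Nat.add_sub_cancel' hkn]
  simp only [iterate_derivative_X_sub_pow, iterate_derivative_X_add_pow, eval_mul, eval_natCast,
    eval_pow, eval_sub, eval_add, eval_X, eval_C, Nat.descFactorial_eq_factorial_mul_choose,
    Nat.choose_symm hkn, Nat.sub_sub_self hkn, nsmul_eq_mul]
  push_cast
  linear_combination (n.choose k : ℝ) ^ 2 * 2 ^ k * 4 ^ (n - k) * hfac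
    + (n.choose k : ℝ) ^ 2 * n ! * hpow

theorem sum_choose_sq_mul_two_pow_lt {n : ℕ} (hn : n ≠ 0) :
    ∑ p ∈ antidiagonal n, (n.choose p.1 : ℝ) ^ 2 * 2 ^ p.2 < 6 ^ n := by
  have hbinom :
      (6 : ℝ) ^ n = ∑ p ∈ antidiagonal n, 2 ^ n * ((n.choose p.1 : ℝ) * 2 ^ p.2) := by
    rw [← mul_sum, show (6 : ℝ) = 2 * (1 + 2) by norm_num, mul_pow, (Commute.all 1 2).add_pow']
    simp [nsmul_eq_mul]
  rw [hbinom]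
  refine sum_lt_sum (fun p _ => ?_) ⟨(0, n), by simp, ?_⟩
  · rw [sq, mul_assoc]
    gcongr
    exact_mod_cast Nat.choose_le_two_pow n p.1
  · simpa using one_lt_pow₀ (by norm_num : (1 : ℝ) < 2) hn

def posNegBody (ι : Type*) [Fintype ι] (a b : ℝ) : Set (ι → ℝ) :=
  {y | ∑ i, (y i)⁻ ≤ a ∧ ∑ i, (y i)⁺ ≤ b}

section posNegBody

variable {ι κ : Type*} [Fintype ι] [Fintype κ] {a b : ℝ}

theorem convexOn_sum_posPart : ConvexOn ℝ Set.univ fun y : ι → ℝ => ∑ i, (y i)⁺ := by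
  refine ⟨convex_univ, fun x _ z _ p q hp hq _ => ?_⟩
  simp only [smul_eq_mul, mul_sum, ← sum_add_distrib, Pi.add_apply, Pi.smul_apply]
  refine sum_le_sum fun i _ => max_le ?_ (by positivity)
  gcongr <;> exact le_posPart _

theorem convex_posNegBody : Convex ℝ (posNegBody ι a b) := by
  have hconv (r : ℝ) : Convex ℝ {y : ι → ℝ | ∑ i, (y i)⁺ ≤ r} := by
    simpa using convexOn_sum_posPart.convex_le r
  have hbody :
      posNegBody ι a b = -{y | ∑ i, (y i)⁺ ≤ a} ∩ {y | ∑ i, (y i)⁺ ≤ b} := by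
    ext y
    simp [posNegBody]
  rw [hbody]
  exact (hconv a).neg.inter (hconv b)

theorem posNegBody_eq_empty (h : a < 0 ∨ b < 0) : posNegBody ι a b = ∅ := by
  refine Set.eq_empty_of_forall_notMem fun y ⟨hya, hyb⟩ => ?_
  have := sum_nonneg fun i (_ : i ∈ univ) => negPart_nonneg (y i)
  have := sum_nonneg fun i (_ : i ∈ univ) => posPart_nonneg (y i)
  rcases h with h | h <;> linarith

theorem comp_mem_posNegBody {σ : ι → κ} (hσ : σ.Injective) {y : κ → ℝ}
    (hy : y ∈ posNegBody κ a b) : y ∘ σ ∈ posNegBody ι a b := by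
  have hsum (f : ℝ → ℝ) (hf : ∀ t, 0 ≤ f t) : ∑ i, f (y (σ i)) ≤ ∑ j, f (y j) := by
    calc ∑ i, f (y (σ i)) = ∑ j ∈ univ.map ⟨σ, hσ⟩, f (y j) :=
          (sum_map univ ⟨σ, hσ⟩ (fun j => f (y j))).symm
      _ ≤ ∑ j, f (y j) := sum_le_sum_of_subset_of_nonneg (subset_univ _) fun j _ _ => hf _
  exact ⟨(hsum _ negPart_nonneg).trans hy.1, (hsum _ posPart_nonneg).trans hy.2⟩

theorem sub_mem_posNegBody {u v : ι → ℝ} (hu : 0 ≤ u) (hv : 0 ≤ v) (hva : ∑ i, v i ≤ a)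
    (hub : ∑ i, u i ≤ b) : u - v ∈ posNegBody ι a b := by
  refine ⟨le_trans (sum_le_sum fun i _ => ?_) hva, le_trans (sum_le_sum fun i _ => ?_) hub⟩
  · exact max_le (by simpa using hu i) (hv i)
  · exact max_le (by simpa using hv i) (hu i)

theorem single_add_single_sub_single_mem_posNegBody [DecidableEq ι] (i j k : ι) :
    Pi.single i 1 + Pi.single j 1 - Pi.single k 1 ∈ posNegBody ι 1 2 :=
  sub_mem_posNegBody (add_nonneg (Pi.single_nonneg.mpr zero_le_one)
    (Pi.single_nonneg.mpr zero_le_one)) (Pi.single_nonneg.mpr zero_le_one) (by simp)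
    (by norm_num [sum_add_distrib])

theorem single_mem_posNegBody [DecidableEq ι] (r : ι) : Pi.single r 1 ∈ posNegBody ι 1 2 := by
  simpa using sub_mem_posNegBody (u := Pi.single r 1) (v := 0) (a := 1) (b := 2)
    (Pi.single_nonneg.mpr zero_le_one) le_rfl (by simp) (by simp)

theorem mem_posNegBody_succ {n : ℕ} {y : Fin (n + 1) → ℝ} :
    y ∈ posNegBody (Fin (n + 1)) a b ↔
      Fin.tail y ∈ posNegBody (Fin n) (a - (y 0)⁻) (b - (y 0)⁺) := by
  simp only [posNegBody, Set.mem_ofPred_eq, Fin.sum_univ_succ, Fin.tail]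
  constructor <;> rintro ⟨h₁, h₂⟩ <;> constructor <;> linarith

end posNegBody

noncomputable def posNegVolume (n : ℕ) (a b : ℝ) : ℝ :=
  ∑ p ∈ antidiagonal n, (n.choose p.1 : ℝ) * (a ^ p.1 / p.1 ! * (b ^ p.2 / p.2 !))

theorem integral_pow_div_factorial (k : ℕ) (x : ℝ) :
    ∫ u in 0..x, u ^ k / k ! = x ^ (k + 1) / (k + 1)! := by
  rw [intervalIntegral.integral_div, integral_pow, Nat.factorial_succ]
  push_cast
  field_simp
  ring

theorem posNegVolume_succ (n : ℕ) (a b : ℝ) :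
    posNegVolume (n + 1) a b =
      (∫ u in 0..a, posNegVolume n u b) + ∫ u in 0..b, posNegVolume n a u := by
  unfold posNegVolume
  rw [sum_antidiagonal_choose_succ_mul (fun i j => a ^ i / i ! * (b ^ j / j !)), add_comm,
    intervalIntegral.integral_finsetSum fun _ _ =>
      (by fun_prop : Continuous _).intervalIntegrable _ _,
    intervalIntegral.integral_finsetSum fun _ _ =>
      (by fun_prop : Continuous _).intervalIntegrable _ _]
  congr 1 <;> refine sum_congr rfl fun p hp => ?_
  · rw [← Nat.choose_symm_of_eq_add (mem_antidiagonal.mp hp).symm,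
      intervalIntegral.integral_const_mul, intervalIntegral.integral_mul_const,
      integral_pow_div_factorial]
  · rw [intervalIntegral.integral_const_mul, intervalIntegral.integral_const_mul,
      integral_pow_div_factorial]

theorem posNegVolume_nonneg (n : ℕ) {a b : ℝ} (ha : 0 ≤ a) (hb : 0 ≤ b) :
    0 ≤ posNegVolume n a b :=
  sum_nonneg fun _ _ => by positivity

theorem continuous_posNegVolume_slice (n : ℕ) (a b : ℝ) :
    Continuous fun t : ℝ => posNegVolume n (a - t⁻) (b - t⁺) := by
  unfold posNegVolume
  fun_prop

theorem mem_Icc_iff_sub_negPart_nonneg_and_sub_posPart_nonneg {a b t : ℝ} (ha : 0 ≤ a)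
    (hb : 0 ≤ b) : t ∈ Set.Icc (-a) b ↔ 0 ≤ a - t⁻ ∧ 0 ≤ b - t⁺ := by
  simp only [Set.mem_Icc, sub_nonneg, negPart_def, posPart_def, sup_le_iff, ha, hb, and_true,
    neg_le]

theorem integral_posNegVolume_slice (n : ℕ) {a b : ℝ} (ha : 0 ≤ a) (hb : 0 ≤ b) :
    ∫ t in -a..b, posNegVolume n (a - t⁻) (b - t⁺) = posNegVolume (n + 1) a b := by
  have hint := (continuous_posNegVolume_slice n a b).intervalIntegrable (μ := volume)
  rw [← intervalIntegral.integral_add_adjacent_intervals (b := 0) (hint _ _) (hint _ _),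
    posNegVolume_succ]
  congr 1
  · calc ∫ t in -a..0, posNegVolume n (a - t⁻) (b - t⁺)
        = ∫ t in -a..0, posNegVolume n (a + t) b := by
          refine intervalIntegral.integral_congr fun t ht => ?_
          rw [Set.uIcc_of_le (by linarith)] at ht
          simp [negPart_eq_neg.mpr ht.2, posPart_eq_zero.mpr ht.2]
      _ = ∫ u in 0..a, posNegVolume n u b := by
          simp [intervalIntegral.integral_comp_add_left (fun u => posNegVolume n u b)]
  · calc ∫ t in 0..b, posNegVolume n (a - t⁻) (b - t⁺)
        = ∫ t in 0..b, posNegVolume n a (b - t) := by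
          refine intervalIntegral.integral_congr fun t ht => ?_
          rw [Set.uIcc_of_le hb] at ht
          simp [negPart_eq_zero.mpr ht.1, posPart_eq_self.mpr ht.1]
      _ = ∫ u in 0..b, posNegVolume n a u := by
          simp [intervalIntegral.integral_comp_sub_left (fun u => posNegVolume n a u)]

theorem factorial_mul_posNegVolume_one_two (n : ℕ) :
    n ! * posNegVolume n 1 2 = ∑ p ∈ antidiagonal n, (n.choose p.1 : ℝ) ^ 2 * 2 ^ p.2 := by
  rw [posNegVolume, mul_sum]
  refine sum_congr rfl fun p hp => ?_
  have hfac : (n.choose p.1 : ℝ) * p.1 ! * p.2 ! = n ! := by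
    rw [← mem_antidiagonal.mp hp, Nat.choose_symm_add]
    exact_mod_cast Nat.add_choose_mul_factorial_mul_factorial p.1 p.2
  rw [one_pow, ← hfac]
  field_simp

theorem volume_posNegBody_succ (n : ℕ) (a b : ℝ) :
    volume (posNegBody (Fin (n + 1)) a b) =
      ∫⁻ t, volume (posNegBody (Fin n) (a - t⁻) (b - t⁺)) := by
  set S : Set (ℝ × (Fin n → ℝ)) := {p | p.2 ∈ posNegBody (Fin n) (a - p.1⁻) (b - p.1⁺)}
  have hS : MeasurableSet S := by
    simp only [S, posNegBody, Set.ofPred_and]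
    exact (measurableSet_le (by fun_prop) (by fun_prop)).inter
      (measurableSet_le (by fun_prop) (by fun_prop))
  have hpre : posNegBody (Fin (n + 1)) a b =
      MeasurableEquiv.piFinSuccAbove (fun _ => ℝ) 0 ⁻¹' S := by
    ext y
    exact mem_posNegBody_succ
  rw [hpre, (volume_preserving_piFinSuccAbove (fun _ => ℝ) 0).measure_preimage
    hS.nullMeasurableSet, Measure.volume_eq_prod, Measure.prod_apply hS]
  rfl

theorem volume_posNegBody (n : ℕ) {a b : ℝ} (ha : 0 ≤ a) (hb : 0 ≤ b) :
    volume (posNegBody (Fin n) a b) = ENNReal.ofReal (posNegVolume n a b) := by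
  induction n generalizing a b with
  | zero =>
    rw [Measure.volume_pi_eq_dirac]
    simp [posNegBody, posNegVolume, ha, hb]
  | succ n ih =>
    have hparams (t : ℝ) := mem_Icc_iff_sub_negPart_nonneg_and_sub_posPart_nonneg (t := t) ha hb
    have hslice (t : ℝ) : volume (posNegBody (Fin n) (a - t⁻) (b - t⁺)) =
        (Set.Icc (-a) b).indicator
          (fun t => ENNReal.ofReal (posNegVolume n (a - t⁻) (b - t⁺))) t := by
      by_cases ht : t ∈ Set.Icc (-a) b
      · rw [Set.indicator_of_mem ht, ih ((hparams t).mp ht).1 ((hparams t).mp ht).2]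
      · rw [Set.indicator_of_notMem ht, posNegBody_eq_empty, measure_empty]
        simpa only [hparams t, not_and_or, not_le] using ht
    calc volume (posNegBody (Fin (n + 1)) a b)
        = ∫⁻ t in Set.Icc (-a) b, ENNReal.ofReal (posNegVolume n (a - t⁻) (b - t⁺)) := by
          simp_rw [volume_posNegBody_succ, hslice, lintegral_indicator measurableSet_Icc]
      _ = ENNReal.ofReal (∫ t in -a..b, posNegVolume n (a - t⁻) (b - t⁺)) := by
          rw [intervalIntegral.integral_of_le (by linarith), ← integral_Icc_eq_integral_Ioc,
            ofReal_integral_eq_lintegral_ofReal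
              (continuous_posNegVolume_slice n a b).integrableOn_Icc]
          exact ae_restrict_of_forall_mem measurableSet_Icc fun t ht =>
            posNegVolume_nonneg n ((hparams t).mp ht).1 ((hparams t).mp ht).2
      _ = ENNReal.ofReal (posNegVolume (n + 1) a b) := by
          rw [integral_posNegVolume_slice n ha hb]

theorem stmt_3_general (d : ℕ) (hd : 2 ≤ d)
    (V : Set (Fin d → ℝ))
    (hV : V ⊆ {x | ∃ i j k : Fin d, k ≠ i ∧ k ≠ j ∧
        x = Pi.single i (1 : ℝ) + Pi.single j (1 : ℝ) - Pi.single k (1 : ℝ)} ∪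
      {x | ∃ r : Fin d, x = Pi.single r (1 : ℝ)}) :
    ((d - 1).factorial : ENNReal) *
        volume ((fun x : Fin d → ℝ => fun i : Fin (d - 1) =>
            x (Fin.castLE (Nat.sub_le d 1) i)) '' convexHull ℝ V)
      ≤ ENNReal.ofReal (legendre (d - 1) 3) ∧
    legendre (d - 1) 3 < 6 ^ (d - 1) := by
  have hV_body : V ⊆ posNegBody (Fin d) 1 2 := by
    intro x hx
    rcases hV hx with ⟨i, j, k, -, -, rfl⟩ | ⟨r, rfl⟩
    · exact single_add_single_sub_single_mem_posNegBody i j k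
    · exact single_mem_posNegBody r
  have hproj : (fun x : Fin d → ℝ => fun i : Fin (d - 1) =>
      x (Fin.castLE (Nat.sub_le d 1) i)) '' convexHull ℝ V ⊆ posNegBody (Fin (d - 1)) 1 2 := by
    rintro _ ⟨x, hx, rfl⟩
    exact comp_mem_posNegBody (Fin.castLE_injective _)
      (convexHull_min hV_body convex_posNegBody hx)
  refine ⟨?_, ?_⟩
  · calc _ ≤ ((d - 1)! : ENNReal) * volume (posNegBody (Fin (d - 1)) 1 2) := by gcongr
      _ = ENNReal.ofReal (legendre (d - 1) 3) := by
        rw [volume_posNegBody _ zero_le_one zero_le_two, ← ENNReal.ofReal_natCast,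
          ← ENNReal.ofReal_mul (by positivity), factorial_mul_posNegVolume_one_two,
          legendre_three_eq_sum]
  · rw [legendre_three_eq_sum]
    exact sum_choose_sq_mul_two_pow_lt (by omega)

/-- The normalized volume of the convex hull of any nonempty subset of
`{e_i + e_j − e_k : k ≠ i, k ≠ j} ∪ {e_r}` is at most `P_{d−1}(3) < 6^{d−1}`. -/
theorem stmt_3 (d : ℕ) (hd : 2 ≤ d)
    (V : Set (Fin d → ℝ)) (hne : V.Nonempty)
    (hV : V ⊆ {x | ∃ i j k : Fin d, k ≠ i ∧ k ≠ j ∧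
        x = Pi.single i (1 : ℝ) + Pi.single j (1 : ℝ) - Pi.single k (1 : ℝ)} ∪
      {x | ∃ r : Fin d, x = Pi.single r (1 : ℝ)}) :
    ((d - 1).factorial : ENNReal) *
        volume ((fun x : Fin d → ℝ => fun i : Fin (d - 1) =>
            x (Fin.castLE (Nat.sub_le d 1) i)) '' convexHull ℝ V)
      ≤ ENNReal.ofReal (legendre (d - 1) 3) ∧
    legendre (d - 1) 3 < 6 ^ (d - 1) :=
  stmt_3_general d hd V hV
end

section
/- For every integer n ≥ 1, the value P_n(3) of the n-th Legendre polynomial at 3 satisfies P_n(3) < (3 + 2√2)^n. -/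
/-!
Leibniz's rule applied to `(t - 1)^n (t + 1)^n` gives
`P_n(z) = ∑ C(n,k)^2 ((z-1)/2)^k ((z+1)/2)^(n-k)`, so `P_n(3) = ∑ (C(n,k) √2^(n-k))^2` is the sum
of the squares of the terms of the binomial expansion of `(1 + √2)^n`. These terms are positive and,
for `n ≥ 1`, there are at least two of them, so the sum of their squares is strictly less than
`((1 + √2)^n)^2 = (3 + 2√2)^n`.
-/

open Polynomial Finset Nat

theorem Polynomial.iteratedDeriv_eval {𝕜 : Type*} [NontriviallyNormedField 𝕜] (p : 𝕜[X]) (k : ℕ) :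
    iteratedDeriv k (fun t => p.eval t) = fun t => (derivative^[k] p).eval t := by
  rw [iteratedDeriv_eq_iterate]
  induction k generalizing p with
  | zero => rfl
  | succ k ih =>
    rw [Function.iterate_succ_apply, Function.iterate_succ_apply, ← ih]
    congr 1
    funext t
    exact p.deriv

theorem Nat.choose_mul_descFactorial_mul_descFactorial_sub {n k : ℕ} (hk : k ≤ n) :
    n.choose k * n.descFactorial k * n.descFactorial (n - k) = n ! * n.choose k ^ 2 := by
  rw [descFactorial_eq_factorial_mul_choose, descFactorial_eq_factorial_mul_choose,
    choose_symm hk, ← choose_mul_factorial_mul_factorial hk]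
  ring

theorem Finset.sum_sq_lt_sq_sum_of_pos {ι R : Type*} [Semiring R] [PartialOrder R]
    [IsStrictOrderedRing R] {f : ι → R} {s : Finset ι} (hs : 1 < #s) (hf : ∀ i ∈ s, 0 < f i) :
    ∑ i ∈ s, f i ^ 2 < (∑ i ∈ s, f i) ^ 2 := by
  have hlt_sum : ∀ i ∈ s, f i < ∑ j ∈ s, f j := fun i hi => by
    obtain ⟨j, hj, hji⟩ := exists_mem_ne hs i
    exact single_lt_sum hji hi hj (hf j hj) fun k hk _ => (hf k hk).le
  calc ∑ i ∈ s, f i ^ 2 < ∑ i ∈ s, f i * ∑ j ∈ s, f j :=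
        sum_lt_sum_of_nonempty (card_pos.mp (by omega)) fun i hi => by
          rw [sq]; exact mul_lt_mul_of_pos_left (hlt_sum i hi) (hf i hi)
    _ = (∑ i ∈ s, f i) ^ 2 := by rw [← sum_mul, sq]

theorem iteratedDeriv_sq_sub_one_pow (n : ℕ) (z : ℝ) :
    iteratedDeriv n (fun t : ℝ => (t ^ 2 - 1) ^ n) z =
      (n ! : ℝ) * ∑ k ∈ range (n + 1), (n.choose k : ℝ) ^ 2 * (z - 1) ^ k * (z + 1) ^ (n - k) := by
  have hpoly : (fun t : ℝ => (t ^ 2 - 1) ^ n) =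
      fun t => ((X - C 1) ^ n * (X + C 1) ^ n : ℝ[X]).eval t := by
    funext t
    simp only [eval_mul, eval_pow, eval_sub, eval_add, eval_X, eval_C, ← mul_pow]
    ring
  rw [hpoly, Polynomial.iteratedDeriv_eval]
  beta_reduce
  rw [iterate_derivative_mul, eval_finsetSum, mul_sum]
  refine sum_congr rfl fun k hk => ?_
  have hk : k ≤ n := Nat.lt_succ_iff.mp (mem_range.mp hk)
  have hcoef : (n.choose k * n.descFactorial k * n.descFactorial (n - k) : ℝ) =
      n ! * n.choose k ^ 2 := by
    exact_mod_cast choose_mul_descFactorial_mul_descFactorial_sub hk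
  rw [iterate_derivative_X_sub_pow, iterate_derivative_X_add_pow, Nat.sub_sub_self hk]
  simp only [nsmul_eq_mul, eval_mul, eval_natCast, eval_pow, eval_sub, eval_add, eval_X, eval_C]
  linear_combination (z - 1) ^ k * (z + 1) ^ (n - k) * hcoef

theorem legendre_eq_sum_choose_sq (n : ℕ) (z : ℝ) :
    legendre n z =
      ∑ k ∈ range (n + 1), (n.choose k : ℝ) ^ 2 * ((z - 1) / 2) ^ k * ((z + 1) / 2) ^ (n - k) := by
  rw [legendre, iteratedDeriv_sq_sub_one_pow, mul_comm (2 ^ n : ℝ), ← div_div,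
    mul_div_cancel_left₀ _ (by positivity), sum_div]
  refine sum_congr rfl fun k hk => ?_
  have hk : k ≤ n := Nat.lt_succ_iff.mp (mem_range.mp hk)
  rw [div_pow, div_pow, ← Nat.add_sub_cancel' hk, pow_add]
  simp only [Nat.add_sub_cancel_left]
  field_simp

theorem legendre_three (n : ℕ) :
    legendre n 3 = ∑ k ∈ range (n + 1), ((n.choose k : ℝ) * √2 ^ (n - k)) ^ 2 := by
  rw [legendre_eq_sum_choose_sq]
  refine sum_congr rfl fun k _ => ?_
  rw [mul_pow, ← pow_mul, mul_comm (n - k), pow_mul, Real.sq_sqrt zero_le_two]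
  norm_num

/-- For every `n ≥ 1`, `P_n(3) < (3 + 2√2)^n`. -/
theorem stmt_4 (n : ℕ) (hn : 1 ≤ n) :
    legendre n 3 < (3 + 2 * Real.sqrt 2) ^ n := by
  have hbinom : (1 + √2) ^ n = ∑ k ∈ range (n + 1), (n.choose k : ℝ) * √2 ^ (n - k) := by
    rw [add_pow]
    exact sum_congr rfl fun k _ => by ring
  have hsquare : (3 + 2 * √2) ^ n = ((1 + √2) ^ n) ^ 2 := by
    rw [← pow_mul, mul_comm n 2, pow_mul]
    congr 1
    linear_combination (-1 : ℝ) * Real.sq_sqrt zero_le_two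
  rw [legendre_three, hsquare, hbinom]
  refine sum_sq_lt_sq_sum_of_pos (by rw [card_range]; omega) fun k hk => ?_
  have hk : k ≤ n := Nat.lt_succ_iff.mp (mem_range.mp hk)
  exact mul_pos (by exact_mod_cast choose_pos hk) (pow_pos (by positivity) _)
end

section
/- Let D : ℕ → ℕ → ℝ be the Delannoy array, i.e. D satisfies D(m, 0) = 1 for all m, D(0, n) = 1 for all n, and D(m+1, n+1) = D(m, n+1) + D(m+1, n) + D(m, n) for all m, n. Then for every n, the central Delannoy number D(n, n) equals P_n(3), the value of the n-th Legendre polynomial at 3. -/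
/-!
The array `∑ₖ C(m,k) C(n,k) 2ᵏ` satisfies the Delannoy recurrence, so it is `D`. On the other side,
the Leibniz rule applied to `(t² - 1)ⁿ = (t - 1)ⁿ (t + 1)ⁿ` gives
`Pₙ(z) = ∑ₖ C(n,k)² ((z - 1)/2)ⁿ⁻ᵏ ((z + 1)/2)ᵏ`, which at `z = 3` is the same sum with `m = n`.
-/

open Finset

noncomputable def delannoy (m n : ℕ) : ℝ :=
  ∑ k ∈ range (n + 1), (m.choose k : ℝ) * n.choose k * 2 ^ k

lemma delannoy_eq_sum_range {m n N : ℕ} (hN : n < N) :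
    delannoy m n = ∑ k ∈ range N, (m.choose k : ℝ) * n.choose k * 2 ^ k := by
  refine sum_subset (range_subset_range.2 hN) fun k _ hk => ?_
  rw [Nat.choose_eq_zero_of_lt (n := n) (by simpa using hk)]
  simp

@[simp] lemma delannoy_zero_right (m : ℕ) : delannoy m 0 = 1 := by simp [delannoy]

@[simp] lemma delannoy_zero_left (n : ℕ) : delannoy 0 n = 1 := by
  simp [delannoy, sum_range_succ']

lemma delannoy_succ_succ (m n : ℕ) :
    delannoy (m + 1) (n + 1) = delannoy m (n + 1) + delannoy (m + 1) n + delannoy m n := by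
  -- the mixed second difference of `C(m,k) C(n,k)` in `(m, n)` is `C(m,k-1) C(n,k-1)`
  have hdiff : delannoy (m + 1) (n + 1) - delannoy m (n + 1) - delannoy (m + 1) n
      + delannoy m n = 2 * delannoy m n := by
    have hN : n + 1 < n + 2 := by omega
    conv_lhs => rw [delannoy_eq_sum_range hN, delannoy_eq_sum_range (m := m) hN,
      delannoy_eq_sum_range (m := m + 1) (by omega : n < n + 2),
      delannoy_eq_sum_range (m := m) (by omega : n < n + 2), ← sum_sub_distrib,
      ← sum_sub_distrib, ← sum_add_distrib, sum_range_succ']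
    rw [delannoy, mul_sum]
    simp only [Nat.choose_succ_succ', Nat.choose_zero_right]
    push_cast
    ring_nf
  linarith

lemma eq_delannoy {D : ℕ → ℕ → ℝ} (h1 : ∀ m, D m 0 = 1) (h2 : ∀ n, D 0 n = 1)
    (h3 : ∀ m n, D (m + 1) (n + 1) = D m (n + 1) + D (m + 1) n + D m n) (m n : ℕ) :
    D m n = delannoy m n := by
  induction m generalizing n with
  | zero => simp [h2]
  | succ m ihm =>
    induction n with
    | zero => simp [h1]
    | succ n ihn => rw [h3, ihm, ihm, ihn, delannoy_succ_succ]

lemma iteratedDeriv_sub_const_pow (n k : ℕ) (c x : ℝ) :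
    iteratedDeriv k (fun t => (t - c) ^ n) x = n.descFactorial k * (x - c) ^ (n - k) := by
  rw [iteratedDeriv_comp_sub_const k (· ^ n)]
  exact iteratedDeriv_pow n k

lemma descFactorial_mul_descFactorial_sub {n i : ℕ} (hi : i ≤ n) :
    n.descFactorial i * n.descFactorial (n - i) = n.choose i * n.factorial := by
  rw [Nat.descFactorial_eq_factorial_mul_choose, Nat.descFactorial_eq_factorial_mul_choose,
    Nat.choose_symm hi, ← Nat.choose_mul_factorial_mul_factorial hi]
  ring

theorem legendre_eq_sum (n : ℕ) (z : ℝ) :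
    legendre n z = ∑ i ∈ range (n + 1),
      (n.choose i : ℝ) ^ 2 * ((z - 1) / 2) ^ (n - i) * ((z + 1) / 2) ^ i := by
  have hfactor : (fun t : ℝ => (t ^ 2 - 1) ^ n) = fun t => (t - 1) ^ n * (t + 1) ^ n := by
    funext t; rw [← mul_pow]; ring
  have hsmooth (c : ℝ) : ContDiffAt ℝ n (fun t : ℝ => (t - c) ^ n) z := by fun_prop
  rw [legendre, hfactor, iteratedDeriv_fun_mul (hsmooth 1) (by simpa using hsmooth (-1)), sum_div]
  refine sum_congr rfl fun i hi => ?_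
  have hi : i ≤ n := Nat.lt_succ_iff.1 (mem_range.1 hi)
  have hplus : iteratedDeriv (n - i) (fun t : ℝ => (t + 1) ^ n) z
      = n.descFactorial (n - i) * (z + 1) ^ i := by
    simpa [Nat.sub_sub_self hi] using iteratedDeriv_sub_const_pow n (n - i) (-1) z
  have hdesc : (n.descFactorial i : ℝ) * n.descFactorial (n - i) = n.choose i * n.factorial := by
    exact_mod_cast descFactorial_mul_descFactorial_sub hi
  rw [iteratedDeriv_sub_const_pow, hplus, div_pow, div_pow, ← pow_sub_mul_pow 2 hi]
  field_simp
  linear_combination (n.choose i : ℝ) * (z - 1) ^ (n - i) * (z + 1) ^ i * hdesc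

lemma legendre_three_s6 (n : ℕ) : legendre n 3 = delannoy n n := by
  rw [legendre_eq_sum, delannoy]
  refine sum_congr rfl fun i _ => ?_
  norm_num
  ring

/-- The central Delannoy numbers are the values `P_n(3)` of the Legendre polynomials. -/
theorem stmt_6 (D : ℕ → ℕ → ℝ)
    (h1 : ∀ m, D m 0 = 1) (h2 : ∀ n, D 0 n = 1)
    (h3 : ∀ m n, D (m + 1) (n + 1) = D m (n + 1) + D (m + 1) n + D m n) :
    ∀ n, D n n = legendre n 3 := by
  intro n
  rw [eq_delannoy h1 h2 h3, legendre_three_s6]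
end

section
/- Fix an integer p ≥ 2 with p ≢ 0 (mod 4), and let A, B be the p×p complex matrices defined by A e_l = c·e_{l+1} and B e_l = c·ω^l·e_l for l ∈ ℤ/p, where ω = exp(2πi/p), c = i^{1−p²}. For integers (k, l) let m_{(k,l)} = su(p) ∩ (ℂ·A^k B^l + ℂ·A^{−k} B^{−l}), a real subspace of su(p). Then: (1) for every (k, l) with (k, l) ≢ (0, 0) (mod p), the subspace m_{(k,l)} is abelian, i.e. [X, Y] = 0 for all X, Y ∈ m_{(k,l)}; (2) every element of su(p) is a finite sum of elements of the subspaces m_{(k,l)} with (k, l) ≢ (0, 0) (mod p). -/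
/-!
Write `U (k, l) = A^k B^l`. Since `B A = ω A B` with `ω` a primitive `p`-th root of unity,
conjugating `U (k, l)` by `A` or by `B` multiplies it by `ω^(-l)` or `ω^k`, so `U (k, l)` is
traceless unless `p ∣ k` and `p ∣ l`. Hence `tr (U z * (U z')⁻¹) = 0` for `z ≠ z'` in `(ℤ/p)²`,
and the `p²` matrices `U z` are linearly independent, i.e. a basis of the `p × p` matrices.

As `A` and `B` are unitary, `U (k, l)ᴴ = U (k, l)⁻¹` is a scalar multiple of `U (-k, -l)`; this
matrix commutes with `U (k, l)`, which gives (1). For (2), expand a traceless skew-Hermitian `X`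
as `∑ g z • U z`: the coefficient of `U 0 = 1` is `tr X / p = 0`, and
`X = (X - Xᴴ) / 2 = ∑ (g z / 2 • U z - (g z / 2 • U z)ᴴ)` with the `z`-th summand in `m_z`.
-/

open Matrix

section TwistedCommutation

variable {G : Type*} [Group G] {w a b : G}

theorem zpow_mul_zpow_of_mul_eq_mul (hw : ∀ g, Commute w g) (hba : b * a = w * (a * b))
    (k l : ℤ) : b ^ l * a ^ k = w ^ (k * l) * (a ^ k * b ^ l) := by
  have hab : SemiconjBy a b (w⁻¹ * b) := by
    rw [SemiconjBy, mul_assoc, hba, inv_mul_cancel_left]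
  have hbla : SemiconjBy (b ^ l) a (w ^ l * a) := by
    have h := (hab.zpow_right l).eq
    rw [((hw b).inv_left).mul_zpow, _root_.inv_zpow', mul_assoc] at h
    rw [SemiconjBy, mul_assoc, h, ← mul_assoc, ← _root_.zpow_add, add_neg_cancel, zpow_zero,
      one_mul]
  rw [(hbla.zpow_right k).eq, ((hw a).zpow_left l).mul_zpow, ← _root_.zpow_mul, mul_comm l k,
    mul_assoc]

theorem inv_zpow_mul_zpow_of_mul_eq_mul (hw : ∀ g, Commute w g) (hba : b * a = w * (a * b))
    (k l : ℤ) : (a ^ k * b ^ l)⁻¹ = w ^ (k * l) * (a ^ (-k) * b ^ (-l)) := by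
  rw [_root_.mul_inv_rev, ← _root_.zpow_neg, ← _root_.zpow_neg,
    zpow_mul_zpow_of_mul_eq_mul hw hba, neg_mul_neg]

theorem commute_zpow_mul_zpow_neg (hw : ∀ g, Commute w g) (hba : b * a = w * (a * b))
    (k l : ℤ) : Commute (a ^ k * b ^ l) (a ^ (-k) * b ^ (-l)) := by
  have h := inv_zpow_mul_zpow_of_mul_eq_mul hw hba k l
  rw [eq_comm, ← eq_inv_mul_iff_mul_eq] at h
  rw [h]
  exact ((hw _).zpow_left _).inv_left.symm.mul_right (Commute.refl _).inv_right

theorem conj_zpow_mul_zpow_by_left (hw : ∀ g, Commute w g) (hba : b * a = w * (a * b))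
    (k l : ℤ) : a * (a ^ k * b ^ l) * a⁻¹ = w ^ (-l) * (a ^ k * b ^ l) := by
  have h := zpow_mul_zpow_of_mul_eq_mul hw hba 1 l
  rw [one_mul, zpow_one, ← inv_mul_eq_iff_eq_mul, ← _root_.zpow_neg] at h
  calc a * (a ^ k * b ^ l) * a⁻¹ = a ^ k * (a * b ^ l) * a⁻¹ := by group
    _ = a ^ k * (w ^ (-l) * (b ^ l * a)) * a⁻¹ := by rw [h]
    _ = w ^ (-l) * (a ^ k * b ^ l) := by rw [((hw _).zpow_left _).symm.left_comm]; group

theorem conj_zpow_mul_zpow_by_right (hw : ∀ g, Commute w g) (hba : b * a = w * (a * b))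
    (k l : ℤ) : b * (a ^ k * b ^ l) * b⁻¹ = w ^ k * (a ^ k * b ^ l) := by
  have h := zpow_mul_zpow_of_mul_eq_mul hw hba k 1
  rw [mul_one, zpow_one] at h
  calc b * (a ^ k * b ^ l) * b⁻¹ = b * a ^ k * b ^ l * b⁻¹ := by group
    _ = w ^ k * (a ^ k * b) * b ^ l * b⁻¹ := by rw [h]
    _ = w ^ k * (a ^ k * b ^ l) := by group

theorem star_zpow_mul_zpow [StarMul G] (ha : star a = a⁻¹) (hb : star b = b⁻¹) (k l : ℤ) :
    star (a ^ k * b ^ l) = (a ^ k * b ^ l)⁻¹ := by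
  rw [star_mul, star_zpow, star_zpow, ha, hb, _root_.mul_inv_rev, _root_.inv_zpow,
    _root_.inv_zpow]

def weylMonomial {p : ℕ} (a b : G) (z : ZMod p × ZMod p) : G :=
  a ^ (z.1.val : ℤ) * b ^ (z.2.val : ℤ)

theorem weylMonomial_zero {p : ℕ} (a b : G) : weylMonomial a b (0 : ZMod p × ZMod p) = 1 := by
  simp [weylMonomial]

end TwistedCommutation

theorem Units.star_eq_inv_of_star_mul_self {R : Type*} [Monoid R] [StarMul R] {u : Rˣ}
    (h : star (u : R) * u = 1) : star u = u⁻¹ :=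
  eq_inv_of_mul_eq_one_left (Units.ext (by rw [Units.val_mul, Units.coe_star, h, Units.val_one]))

theorem IsPrimitiveRoot.zpow_eq_one_iff_intCast_eq_zero {M : Type*} [DivisionCommMonoid M] {ζ : M}
    {p : ℕ} (hζ : IsPrimitiveRoot ζ p) (k : ℤ) : ζ ^ k = 1 ↔ (k : ZMod p) = 0 := by
  rw [hζ.zpow_eq_one_iff_dvd, ZMod.intCast_zmod_eq_zero_iff_dvd]

theorem eq_sum_smul_sub_star_smul {E ι : Type*} [AddCommGroup E] [Module ℂ E] [StarAddMonoid E]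
    [StarModule ℂ E] [Fintype ι] {x : E} (hx : star x = -x) {g : ι → ℂ} {v : ι → E}
    (h : ∑ i, g i • v i = x) : x = ∑ i, ((g i / 2) • v i - star ((g i / 2) • v i)) := by
  have half : ∑ i, (g i / 2) • v i = (2⁻¹ : ℂ) • x := by
    simp only [← h, Finset.smul_sum, smul_smul, div_eq_inv_mul]
  rw [Finset.sum_sub_distrib, ← star_sum, half, star_smul, hx, smul_neg, sub_neg_eq_add,
    ← add_smul]
  norm_num

section WeylPair

variable {K : Type*} [Field K] {n : Type*} [Fintype n] [DecidableEq n]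

abbrev scalarUnit (ζ : Kˣ) : (Matrix n n K)ˣ :=
  Units.map (algebraMap K (Matrix n n K)).toMonoidHom ζ

theorem commute_scalarUnit (ζ : Kˣ) (g : (Matrix n n K)ˣ) : Commute (scalarUnit ζ) g :=
  Units.ext (Algebra.commutes _ _)

theorem val_scalarUnit_mul (ζ : Kˣ) (x : (Matrix n n K)ˣ) :
    ((scalarUnit ζ * x : (Matrix n n K)ˣ) : Matrix n n K) = (ζ : K) • (x : Matrix n n K) := by
  rw [Units.val_mul, Units.coe_map, RingHom.toMonoidHom_eq_coe, MonoidHom.coe_coe,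
    Algebra.algebraMap_eq_smul_one, smul_one_mul]

theorem val_scalarUnit_zpow_mul (ζ : Kˣ) (j : ℤ) (x : (Matrix n n K)ˣ) :
    ((scalarUnit ζ ^ j * x : (Matrix n n K)ˣ) : Matrix n n K) =
      (ζ : K) ^ j • (x : Matrix n n K) := by
  rw [← map_zpow, val_scalarUnit_mul, Units.val_zpow_eq_zpow_val]

theorem trace_eq_zero_of_conj_eq_smul (u : (Matrix n n K)ˣ) {x : Matrix n n K} {c : K}
    (hc : c ≠ 1) (h : (u : Matrix n n K) * x * ((u⁻¹ : (Matrix n n K)ˣ) : Matrix n n K) = c • x) :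
    x.trace = 0 := by
  have h' := congrArg trace h
  rw [trace_units_conj, trace_smul, smul_eq_mul, eq_comm] at h'
  by_contra hx
  exact hc ((mul_eq_right₀ hx).mp h')

variable {p : ℕ} {ζ : Kˣ} {a b : (Matrix n n K)ˣ}

theorem trace_val_zpow_mul_zpow_eq_zero (hζ : IsPrimitiveRoot (ζ : K) p)
    (hba : b * a = scalarUnit ζ * (a * b)) {k l : ℤ}
    (hkl : ¬((k : ZMod p) = 0 ∧ (l : ZMod p) = 0)) :
    trace ((a ^ k * b ^ l : (Matrix n n K)ˣ) : Matrix n n K) = 0 := by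
  rw [not_and_or, ← hζ.zpow_eq_one_iff_intCast_eq_zero, ← hζ.zpow_eq_one_iff_intCast_eq_zero]
    at hkl
  rcases hkl with hk | hl
  · refine trace_eq_zero_of_conj_eq_smul b hk ?_
    rw [← Units.val_mul, ← Units.val_mul, conj_zpow_mul_zpow_by_right (commute_scalarUnit ζ) hba,
      val_scalarUnit_zpow_mul]
  · refine trace_eq_zero_of_conj_eq_smul a (c := (ζ : K) ^ (-l))
      (by rwa [_root_.zpow_neg, inv_ne_one]) ?_
    rw [← Units.val_mul, ← Units.val_mul, conj_zpow_mul_zpow_by_left (commute_scalarUnit ζ) hba,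
      val_scalarUnit_zpow_mul]

variable [NeZero p]

theorem trace_val_weylMonomial_mul_inv_eq_zero (hζ : IsPrimitiveRoot (ζ : K) p)
    (hba : b * a = scalarUnit ζ * (a * b)) {z z' : ZMod p × ZMod p} (hz : z ≠ z') :
    trace ((weylMonomial a b z * (weylMonomial a b z')⁻¹ : (Matrix n n K)ˣ) : Matrix n n K) =
      0 := by
  have hconj : weylMonomial a b z * (weylMonomial a b z')⁻¹ =
      a ^ (z'.1.val : ℤ) * (a ^ ((z.1.val : ℤ) - z'.1.val) * b ^ ((z.2.val : ℤ) - z'.2.val)) *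
        (a ^ (z'.1.val : ℤ))⁻¹ := by
    simp only [weylMonomial]
    group
  rw [hconj, Units.val_mul, Units.val_mul, trace_units_conj]
  exact trace_val_zpow_mul_zpow_eq_zero hζ hba (by simpa [sub_eq_zero, Prod.ext_iff] using hz)

theorem linearIndependent_weylMonomial (hζ : IsPrimitiveRoot (ζ : K) p)
    (hba : b * a = scalarUnit ζ * (a * b)) (hcard : Fintype.card n = p) :
    LinearIndependent K fun z : ZMod p × ZMod p =>
      ((weylMonomial a b z : (Matrix n n K)ˣ) : Matrix n n K) := by
  have := hζ.neZero'
  rw [Fintype.linearIndependent_iff]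
  intro g hg z
  have h := congrArg (fun M : Matrix n n K =>
    trace (M * (((weylMonomial a b z)⁻¹ : (Matrix n n K)ˣ) : Matrix n n K))) hg
  simp only [Finset.sum_mul, trace_sum, smul_mul_assoc, trace_smul, ← Units.val_mul, zero_mul,
    trace_zero, smul_eq_mul] at h
  rw [Finset.sum_eq_single z
      (fun z' _ hz' => by rw [trace_val_weylMonomial_mul_inv_eq_zero hζ hba hz', mul_zero])
      (by simp), mul_inv_cancel, Units.val_one, trace_one, hcard] at h
  exact (mul_eq_zero.mp h).resolve_right (NeZero.ne _)

theorem span_weylMonomial_eq_top (hζ : IsPrimitiveRoot (ζ : K) p)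
    (hba : b * a = scalarUnit ζ * (a * b)) (hcard : Fintype.card n = p) :
    Submodule.span K (Set.range fun z : ZMod p × ZMod p =>
      ((weylMonomial a b z : (Matrix n n K)ˣ) : Matrix n n K)) = ⊤ :=
  (linearIndependent_weylMonomial hζ hba hcard).span_eq_top_of_card_eq_finrank
    (by simp [Module.finrank_matrix, hcard])

end WeylPair

section SpecialUnitary

variable {n : Type*} [Fintype n] [DecidableEq n] {p : ℕ} {ζ : ℂˣ} {a b : (Matrix n n ℂ)ˣ}

def suSlice (a b : (Matrix n n ℂ)ˣ) (k l : ℤ) : Set (Matrix n n ℂ) :=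
  {X | Xᴴ = -X ∧ X.trace = 0 ∧
    ∃ c d : ℂ, X = c • ((a ^ k * b ^ l : (Matrix n n ℂ)ˣ) : Matrix n n ℂ)
      + d • ((a ^ (-k) * b ^ (-l) : (Matrix n n ℂ)ˣ) : Matrix n n ℂ)}

theorem commute_of_mem_suSlice (hba : b * a = scalarUnit ζ * (a * b)) (k l : ℤ)
    {X Y : Matrix n n ℂ} (hX : X ∈ suSlice a b k l) (hY : Y ∈ suSlice a b k l) :
    Commute X Y := by
  obtain ⟨-, -, c, d, rfl⟩ := hX
  obtain ⟨-, -, c', d', rfl⟩ := hY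
  have h := (commute_zpow_mul_zpow_neg (commute_scalarUnit ζ) hba k l).units_val
  refine .add_left (.add_right ?_ ?_) (.add_right ?_ ?_) <;>
    refine .smul_left (.smul_right ?_ _) _
  exacts [.refl _, h, h.symm, .refl _]

theorem conjTranspose_val_zpow_mul_zpow (hba : b * a = scalarUnit ζ * (a * b))
    (ha : star a = a⁻¹) (hb : star b = b⁻¹) (k l : ℤ) :
    ((a ^ k * b ^ l : (Matrix n n ℂ)ˣ) : Matrix n n ℂ)ᴴ =
      (ζ : ℂ) ^ (k * l) • ((a ^ (-k) * b ^ (-l) : (Matrix n n ℂ)ˣ) : Matrix n n ℂ) := by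
  rw [← star_eq_conjTranspose, ← Units.coe_star, star_zpow_mul_zpow ha hb,
    inv_zpow_mul_zpow_of_mul_eq_mul (commute_scalarUnit ζ) hba, val_scalarUnit_zpow_mul]

theorem smul_sub_conjTranspose_mem_suSlice (hζ : IsPrimitiveRoot (ζ : ℂ) p)
    (hba : b * a = scalarUnit ζ * (a * b)) (ha : star a = a⁻¹) (hb : star b = b⁻¹) {k l : ℤ}
    (hkl : ¬((k : ZMod p) = 0 ∧ (l : ZMod p) = 0)) (α : ℂ) :
    α • ((a ^ k * b ^ l : (Matrix n n ℂ)ˣ) : Matrix n n ℂ)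
      - (α • ((a ^ k * b ^ l : (Matrix n n ℂ)ˣ) : Matrix n n ℂ))ᴴ ∈ suSlice a b k l := by
  refine ⟨by rw [conjTranspose_sub, conjTranspose_conjTranspose, neg_sub], ?_,
    α, -(star α * (ζ : ℂ) ^ (k * l)), ?_⟩
  · rw [trace_sub, trace_conjTranspose, trace_smul, trace_val_zpow_mul_zpow_eq_zero hζ hba hkl,
      smul_zero, star_zero, sub_zero]
  · rw [conjTranspose_smul, conjTranspose_val_zpow_mul_zpow hba ha hb, smul_smul, neg_smul,
      sub_eq_add_neg]

theorem mem_span_suSlice [NeZero p] (hζ : IsPrimitiveRoot (ζ : ℂ) p)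
    (hba : b * a = scalarUnit ζ * (a * b)) (ha : star a = a⁻¹) (hb : star b = b⁻¹)
    (hcard : Fintype.card n = p) {X : Matrix n n ℂ} (hX : Xᴴ = -X) (htr : X.trace = 0) :
    X ∈ Submodule.span ℝ
      (⋃ (k : ℤ) (l : ℤ) (_ : ¬((k : ZMod p) = 0 ∧ (l : ZMod p) = 0)), suSlice a b k l) := by
  obtain ⟨g, hg⟩ := (Submodule.mem_span_range_iff_exists_fun ℂ).mp
    ((span_weylMonomial_eq_top hζ hba hcard).symm ▸ Submodule.mem_top (x := X))
  have hg0 : g 0 = 0 := by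
    have h := congrArg trace hg
    rw [trace_sum, Finset.sum_eq_single 0 ?_ (by simp), htr, weylMonomial_zero, Units.val_one,
      trace_smul, trace_one, hcard, smul_eq_mul, mul_eq_zero] at h
    · exact h.resolve_right (NeZero.ne _)
    · intro z _ hz
      have h := trace_val_weylMonomial_mul_inv_eq_zero hζ hba hz
      rw [weylMonomial_zero, inv_one, mul_one] at h
      rw [trace_smul, h, smul_zero]
  rw [eq_sum_smul_sub_star_smul ((star_eq_conjTranspose X).trans hX) hg]
  refine Submodule.sum_mem _ fun z _ => ?_
  by_cases hz : z = 0
  · simp [hz, hg0]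
  have hz' : ¬(((z.1.val : ℤ) : ZMod p) = 0 ∧ ((z.2.val : ℤ) : ZMod p) = 0) := by
    simpa [Prod.ext_iff] using hz
  refine Submodule.subset_span (Set.mem_iUnion₂.mpr ⟨_, _, Set.mem_iUnion.mpr ⟨hz', ?_⟩⟩)
  rw [star_eq_conjTranspose]
  exact smul_sub_conjTranspose_mem_suSlice hζ hba ha hb hz' _

end SpecialUnitary

section ClockShift

def shiftMatrix {p : ℕ} (c : ℂ) : Matrix (ZMod p) (ZMod p) ℂ :=
  fun r s => if r = s + 1 then c else 0

def clockMatrix {p : ℕ} (c ω : ℂ) : Matrix (ZMod p) (ZMod p) ℂ :=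
  fun r s => if r = s then c * ω ^ s.val else 0

variable {p : ℕ} [NeZero p]

theorem pow_val_add_one {M : Type*} [Monoid M] {ω : M} (hω : ω ^ p = 1) (s : ZMod p) :
    ω ^ (s + 1).val = ω ^ s.val * ω := by
  have hs : s + 1 = ((s.val + 1 : ℕ) : ZMod p) := by
    push_cast
    rw [ZMod.natCast_zmod_val]
  rw [hs, ZMod.val_natCast, ← pow_eq_pow_mod _ hω, pow_succ]

theorem conjTranspose_shiftMatrix_mul_self {c : ℂ} (hc : ‖c‖ = 1) :
    (shiftMatrix c : Matrix (ZMod p) (ZMod p) ℂ)ᴴ * shiftMatrix c = 1 := by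
  ext r s
  simp only [shiftMatrix, mul_apply, conjTranspose_apply, one_apply, RCLike.star_def, mul_ite,
    mul_zero, Finset.sum_ite_eq', Finset.mem_univ, if_true, add_left_inj]
  obtain rfl | h := eq_or_ne r s
  · simp [Complex.conj_mul', hc]
  · simp [h, h.symm]

theorem conjTranspose_clockMatrix_mul_self {c ω : ℂ} (hc : ‖c‖ = 1) (hω : ‖ω‖ = 1) :
    (clockMatrix c ω : Matrix (ZMod p) (ZMod p) ℂ)ᴴ * clockMatrix c ω = 1 := by
  ext r s
  simp only [clockMatrix, mul_apply, conjTranspose_apply, one_apply, RCLike.star_def, mul_ite,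
    mul_zero, Finset.sum_ite_eq', Finset.mem_univ, if_true]
  obtain rfl | h := eq_or_ne r s
  · rw [if_pos rfl, if_pos rfl, Complex.conj_mul', norm_mul, norm_pow, hc, hω]
    simp
  · simp [h, h.symm]

theorem clockMatrix_mul_shiftMatrix {c ω : ℂ} (hω : ω ^ p = 1) :
    (clockMatrix c ω * shiftMatrix c : Matrix (ZMod p) (ZMod p) ℂ) =
      ω • (shiftMatrix c * clockMatrix c ω) := by
  ext r s
  simp only [mul_apply, clockMatrix, shiftMatrix, mul_ite, ite_mul, zero_mul, mul_zero,
    Finset.sum_ite_eq', Finset.mem_univ, if_true, Matrix.smul_apply, smul_eq_mul]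
  split_ifs
  · rw [pow_val_add_one hω]
    ring
  · rfl

end ClockShift

theorem stmt_10_general (p : ℕ) [NeZero p]
    (ω c : ℂ)
    (hω : ω = Complex.exp (2 * Real.pi * Complex.I / p))
    (hc : c = Complex.I ^ ((1 : ℤ) - (p : ℤ) ^ 2))
    (A' B' : (Matrix (ZMod p) (ZMod p) ℂ)ˣ)
    (hA' : (A' : Matrix (ZMod p) (ZMod p) ℂ) = fun r s => if r = s + 1 then c else 0)
    (hB' : (B' : Matrix (ZMod p) (ZMod p) ℂ) = fun r s => if r = s then c * ω ^ s.val else 0)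
    (m : ℤ → ℤ → Set (Matrix (ZMod p) (ZMod p) ℂ))
    (hm : ∀ k l : ℤ, m k l = {X | Xᴴ = -X ∧ X.trace = 0 ∧
      ∃ a b : ℂ, X = a • ((A' ^ k * B' ^ l :
            (Matrix (ZMod p) (ZMod p) ℂ)ˣ) : Matrix (ZMod p) (ZMod p) ℂ)
        + b • ((A' ^ (-k) * B' ^ (-l) :
            (Matrix (ZMod p) (ZMod p) ℂ)ˣ) : Matrix (ZMod p) (ZMod p) ℂ)}) :
    (∀ k l : ℤ, ¬((k : ZMod p) = 0 ∧ (l : ZMod p) = 0) →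
      ∀ X ∈ m k l, ∀ Y ∈ m k l, X * Y - Y * X = 0) ∧
    (∀ X : Matrix (ZMod p) (ZMod p) ℂ, Xᴴ = -X → X.trace = 0 →
      X ∈ Submodule.span ℝ
        (⋃ (k : ℤ) (l : ℤ) (_ : ¬((k : ZMod p) = 0 ∧ (l : ZMod p) = 0)), m k l)) := by
  obtain rfl : m = suSlice A' B' := funext fun k => funext (hm k)
  have hωp : IsPrimitiveRoot ω p := hω ▸ Complex.isPrimitiveRoot_exp p (NeZero.ne p)
  let ζ : ℂˣ := Units.mk0 ω (hωp.ne_zero (NeZero.ne p))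
  have hA : (A' : Matrix (ZMod p) (ZMod p) ℂ) = shiftMatrix c := hA'
  have hB : (B' : Matrix (ZMod p) (ZMod p) ℂ) = clockMatrix c ω := hB'
  have hc1 : ‖c‖ = 1 := by rw [hc, norm_zpow, Complex.norm_I, _root_.one_zpow]
  have hA_star : star A' = A'⁻¹ := Units.star_eq_inv_of_star_mul_self <| by
    rw [star_eq_conjTranspose, hA, conjTranspose_shiftMatrix_mul_self hc1]
  have hB_star : star B' = B'⁻¹ := Units.star_eq_inv_of_star_mul_self <| by
    rw [star_eq_conjTranspose, hB,
      conjTranspose_clockMatrix_mul_self hc1 (hωp.norm'_eq_one (NeZero.ne p))]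
  have hBA : B' * A' = scalarUnit ζ * (A' * B') := Units.ext <| by
    rw [val_scalarUnit_mul, Units.val_mul, Units.val_mul, hA, hB]
    exact clockMatrix_mul_shiftMatrix hωp.pow_eq_one
  exact ⟨fun k l _ X hX Y hY => sub_eq_zero.mpr (commute_of_mem_suSlice hBA k l hX hY).eq,
    fun X hX htr => mem_span_suSlice hωp hBA hA_star hB_star (ZMod.card p) hX htr⟩

/-- The real subspaces `m_{(k,l)} = su(p) ∩ (ℂ·A^k B^l + ℂ·A^{−k} B^{−l})` with
`(k,l) ≢ (0,0) (mod p)` are abelian, and they span `su(p)`. -/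
theorem stmt_10 (p : ℕ) (hp : 2 ≤ p) [NeZero p] (hp4 : p % 4 ≠ 0)
    (ω c : ℂ)
    (hω : ω = Complex.exp (2 * Real.pi * Complex.I / p))
    (hc : c = Complex.I ^ ((1 : ℤ) - (p : ℤ) ^ 2))
    (A' B' : (Matrix (ZMod p) (ZMod p) ℂ)ˣ)
    (hA' : (A' : Matrix (ZMod p) (ZMod p) ℂ) = fun r s => if r = s + 1 then c else 0)
    (hB' : (B' : Matrix (ZMod p) (ZMod p) ℂ) = fun r s => if r = s then c * ω ^ s.val else 0)
    (m : ℤ → ℤ → Set (Matrix (ZMod p) (ZMod p) ℂ))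
    (hm : ∀ k l : ℤ, m k l = {X | Xᴴ = -X ∧ X.trace = 0 ∧
      ∃ a b : ℂ, X = a • ((A' ^ k * B' ^ l :
            (Matrix (ZMod p) (ZMod p) ℂ)ˣ) : Matrix (ZMod p) (ZMod p) ℂ)
        + b • ((A' ^ (-k) * B' ^ (-l) :
            (Matrix (ZMod p) (ZMod p) ℂ)ˣ) : Matrix (ZMod p) (ZMod p) ℂ)}) :
    (∀ k l : ℤ, ¬((k : ZMod p) = 0 ∧ (l : ZMod p) = 0) →
      ∀ X ∈ m k l, ∀ Y ∈ m k l, X * Y - Y * X = 0) ∧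
    (∀ X : Matrix (ZMod p) (ZMod p) ℂ, Xᴴ = -X → X.trace = 0 →
      X ∈ Submodule.span ℝ
        (⋃ (k : ℤ) (l : ℤ) (_ : ¬((k : ZMod p) = 0 ∧ (l : ZMod p) = 0)), m k l)) :=
  stmt_10_general p ω c hω hc A' B' hA' hB' m hm
end

section
/- Let p be a prime, ω = exp(2πi/p), c = i^{1−p²}, and let A, B be the p×p complex matrices defined by A e_l = c·e_{l+1} and B e_l = c·ω^l·e_l for l ∈ ℤ/p. For integers (k, l) let m_{(k,l)} = su(p) ∩ (ℂ·A^k B^l + ℂ·A^{−k} B^{−l}). Then for all integer pairs (k, l) and (k′, l′), each nonzero modulo p, one has [m_{(k,l)}, m_{(k′,l′)}] = 0 (i.e. [X, Y] = 0 for all X ∈ m_{(k,l)}, Y ∈ m_{(k′,l′)}) if and only if k l′ ≡ k′ l (mod p), i.e. if and only if the vectors (k, l) and (k′, l′) are proportional over the field ℤ/p. -/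
/-!
Up to the scalar `c ^ (k + l)`, `A ^ k * B ^ l` is the Weyl matrix `W(k,l) : e_s ↦ ψ(l s) e_{s+k}`,
where `ψ` is the standard additive character of `ℤ/p`, and
`W(k,l) W(k',l') = ψ(l k') W(k+k',l+l')`. So `W(k,l)` and `W(k',l')` commute iff
`ψ(l k') = ψ(l' k)`, i.e. iff `k l' = k' l`. Since `W(k,l)ᴴ` is a multiple of `W(-k,-l)` and
`W(k,l)` is traceless, `W - Wᴴ` and `i (W + Wᴴ)` lie in `m_{(k,l)}`; hence `m_{(k,l)}` spans
`ℂ W(k,l) + ℂ W(-k,-l)` over `ℂ`, and the `m`'s commute iff the Weyl matrices do.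
-/

open Matrix

lemma val_zpow_eq_of_map_add {M : Type*} [Monoid M] {f : ℤ → M} (h0 : f 0 = 1)
    (hadd : ∀ m n, f (m + n) = f m * f n) {u : Mˣ} (hu : (u : M) = f 1) (n : ℤ) :
    ((u ^ n : Mˣ) : M) = f n := by
  have hinv : ((u⁻¹ : Mˣ) : M) = f (-1) :=
    Units.inv_eq_of_mul_eq_one_right (by rw [hu, ← hadd, add_neg_cancel, h0])
  induction n using Int.induction_on with
  | zero => rw [zpow_zero, Units.val_one, h0]
  | succ n ih => rw [_root_.zpow_add_one, Units.val_mul, ih, hu, hadd]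
  | pred n ih => rw [_root_.zpow_sub_one, Units.val_mul, ih, hinv, ← hadd, sub_eq_add_neg]

section Weyl

variable {N : ℕ} [NeZero N]

noncomputable def weyl (k l : ZMod N) : Matrix (ZMod N) (ZMod N) ℂ :=
  of fun r s => if r = s + k then ZMod.stdAddChar (l * s) else 0

lemma weyl_apply (k l r s : ZMod N) :
    weyl k l r s = if r = s + k then ZMod.stdAddChar (l * s) else 0 := rfl

lemma weyl_zero_zero : weyl (0 : ZMod N) 0 = 1 := by
  ext r s
  simp [weyl_apply, one_apply]

lemma weyl_mul_weyl (k l k' l' : ZMod N) :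
    weyl k l * weyl k' l' = ZMod.stdAddChar (l * k') • weyl (k + k') (l + l') := by
  ext r s
  rw [mul_apply, Finset.sum_eq_single (s + k')
    (fun t _ ht => by rw [weyl_apply _ _ t, if_neg ht, mul_zero]) (by simp),
    Matrix.smul_apply, weyl_apply, weyl_apply, weyl_apply, if_pos rfl, add_right_comm, add_assoc]
  split_ifs
  · rw [smul_eq_mul, mul_add, add_mul, AddChar.map_add_eq_mul, AddChar.map_add_eq_mul]; ring
  · simp

lemma conjTranspose_weyl (k l : ZMod N) :
    (weyl k l)ᴴ = ZMod.stdAddChar (k * l) • weyl (-k) (-l) := by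
  ext r s
  rw [conjTranspose_apply, Matrix.smul_apply, weyl_apply, weyl_apply]
  by_cases h : s = r + k
  · rw [if_pos h, if_pos (by rw [h]; ring), smul_eq_mul, ← AddChar.map_add_eq_mul,
      Complex.star_def, ← AddChar.map_neg_eq_conj, h]
    ring_nf
  · rw [if_neg h, if_neg (fun h' => h (by rw [h']; ring))]
    simp

lemma trace_weyl {k l : ZMod N} (h : ¬(k = 0 ∧ l = 0)) : (weyl k l).trace = 0 := by
  by_cases hk : k = 0
  · have hl : l ≠ 0 := fun hl => h ⟨hk, hl⟩
    simpa [trace, weyl_apply, hk, ← AddChar.mulShift_apply] using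
      AddChar.sum_eq_zero_of_ne_one (ZMod.isPrimitive_stdAddChar N hl)
  · exact Finset.sum_eq_zero fun s _ => by simp [weyl_apply, hk]

lemma weyl_ne_zero (k l : ZMod N) : weyl k l ≠ 0 := fun h => by
  simpa [weyl_apply] using congr_fun₂ h k 0

lemma commute_weyl_iff (k l k' l' : ZMod N) :
    Commute (weyl k l) (weyl k' l') ↔ k * l' = k' * l := by
  rw [commute_iff_eq, weyl_mul_weyl, weyl_mul_weyl, add_comm k', add_comm l',
    (smul_left_injective ℂ (weyl_ne_zero _ _)).eq_iff, ZMod.injective_stdAddChar.eq_iff]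
  constructor <;> intro h <;> linear_combination -h

lemma stdAddChar_eq_pow_val (j : ZMod N) :
    ZMod.stdAddChar j = Complex.exp (2 * Real.pi * Complex.I / N) ^ j.val := by
  rw [ZMod.stdAddChar_apply, ZMod.toCircle_apply, ← Complex.exp_nat_mul]
  ring_nf

lemma val_zpow_mul_zpow_eq_weyl {c : ℂ} (hc : c ≠ 0)
    {A B : (Matrix (ZMod N) (ZMod N) ℂ)ˣ} (hA : (A : Matrix (ZMod N) (ZMod N) ℂ) = c • weyl 1 0)
    (hB : (B : Matrix (ZMod N) (ZMod N) ℂ) = c • weyl 0 1) (k l : ℤ) :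
    ((A ^ k * B ^ l : (Matrix (ZMod N) (ZMod N) ℂ)ˣ) : Matrix (ZMod N) (ZMod N) ℂ) =
      c ^ (k + l) • weyl (k : ZMod N) l := by
  have hAk := val_zpow_eq_of_map_add (f := fun n : ℤ => c ^ n • weyl (n : ZMod N) 0)
    (by simp [weyl_zero_zero])
    (fun m n => by simp [zpow_add₀ hc, weyl_mul_weyl, smul_smul, mul_comm])
    (by simpa using hA) k
  have hBl := val_zpow_eq_of_map_add (f := fun n : ℤ => c ^ n • weyl 0 (n : ZMod N))
    (by simp [weyl_zero_zero])
    (fun m n => by simp [zpow_add₀ hc, weyl_mul_weyl, smul_smul, mul_comm])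
    (by simpa using hB) l
  rw [Units.val_mul, hAk, hBl, smul_mul_smul_comm, weyl_mul_weyl, zpow_add₀ hc]
  simp

end Weyl

section SkewTraceless

variable {n : Type*} [Fintype n]

def skewTracelessSpan (M M' : Matrix n n ℂ) : Set (Matrix n n ℂ) :=
  {X | Xᴴ = -X ∧ X.trace = 0 ∧ ∃ a b : ℂ, X = a • M + b • M'}

lemma skewTracelessSpan_smul {u v : ℂ} (hu : u ≠ 0) (hv : v ≠ 0) (M M' : Matrix n n ℂ) :
    skewTracelessSpan (u • M) (v • M') = skewTracelessSpan M M' := by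
  ext X
  simp only [skewTracelessSpan, Set.mem_ofPred_eq, smul_smul]
  refine and_congr_right' (and_congr_right' ⟨fun ⟨a, b, h⟩ => ⟨a * u, b * v, h⟩,
    fun ⟨a, b, h⟩ => ⟨a / u, b / v, by rwa [div_mul_cancel₀ _ hu, div_mul_cancel₀ _ hv]⟩⟩)

lemma skewTracelessSpan_subset_span (M M' : Matrix n n ℂ) :
    skewTracelessSpan M M' ⊆ Submodule.span ℂ {M, M'} :=
  fun _ ⟨_, _, a, b, hX⟩ => Submodule.mem_span_pair.mpr ⟨a, b, hX.symm⟩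

lemma mem_span_skewTracelessSpan {M M' : Matrix n n ℂ} {χ : ℂ} (hM : Mᴴ = χ • M')
    (htr : M.trace = 0) : M ∈ Submodule.span ℂ (skewTracelessSpan M M') := by
  have hsub : M - Mᴴ ∈ skewTracelessSpan M M' :=
    ⟨by simp [conjTranspose_sub], by simp [trace_sub, htr], 1, -χ, by rw [hM]; module⟩
  have hadd : Complex.I • (M + Mᴴ) ∈ skewTracelessSpan M M' :=
    ⟨by simp [conjTranspose_add, smul_add, add_comm], by simp [trace_add, htr],
      Complex.I, Complex.I * χ, by rw [hM]; module⟩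
  have hcomb : (2⁻¹ : ℂ) • ((M - Mᴴ) - Complex.I • Complex.I • (M + Mᴴ)) ∈
      Submodule.span ℂ (skewTracelessSpan M M') :=
    Submodule.smul_mem _ _ (Submodule.sub_mem _ (Submodule.subset_span hsub)
      (Submodule.smul_mem _ _ (Submodule.subset_span hadd)))
  convert hcomb using 1
  rw [smul_smul, Complex.I_mul_I]
  module

end SkewTraceless

lemma commute_of_mem_span_of_forall_commute {R A : Type*} [CommSemiring R] [Semiring A]
    [Algebra R A] {s t : Set A} (h : ∀ x ∈ s, ∀ y ∈ t, Commute x y) {x y : A}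
    (hx : x ∈ Submodule.span R s) (hy : y ∈ Submodule.span R t) : Commute x y :=
  Algebra.commute_of_mem_adjoin_of_forall_mem_commute (Algebra.span_le_adjoin R t hy)
    fun y' hy' => (Algebra.commute_of_mem_adjoin_of_forall_mem_commute
      (Algebra.span_le_adjoin R s hx) fun x' hx' => (h x' hx' y' hy').symm).symm

theorem forall_commute_skewTracelessSpan_weyl_iff {N : ℕ} [NeZero N] {k l k' l' : ZMod N}
    (hkl : ¬(k = 0 ∧ l = 0)) (hkl' : ¬(k' = 0 ∧ l' = 0)) :
    (∀ X ∈ skewTracelessSpan (weyl k l) (weyl (-k) (-l)),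
      ∀ Y ∈ skewTracelessSpan (weyl k' l') (weyl (-k') (-l')), Commute X Y) ↔
        k * l' = k' * l := by
  refine ⟨fun H => ?_, fun h X hX Y hY => ?_⟩
  · rw [← commute_weyl_iff]
    exact commute_of_mem_span_of_forall_commute H
      (mem_span_skewTracelessSpan (conjTranspose_weyl k l) (trace_weyl hkl))
      (mem_span_skewTracelessSpan (conjTranspose_weyl k' l') (trace_weyl hkl'))
  · refine commute_of_mem_span_of_forall_commute ?_ (skewTracelessSpan_subset_span _ _ hX)
      (skewTracelessSpan_subset_span _ _ hY)
    simp only [Set.mem_insert_iff, Set.mem_singleton_iff, forall_eq_or_imp, forall_eq,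
      commute_weyl_iff]
    exact ⟨⟨h, by linear_combination -h⟩, by linear_combination -h, by linear_combination h⟩

theorem stmt_11_general (p : ℕ) [NeZero p]
    (ω c : ℂ)
    (hω : ω = Complex.exp (2 * Real.pi * Complex.I / p))
    (hc : c = Complex.I ^ ((1 : ℤ) - (p : ℤ) ^ 2))
    (A' B' : (Matrix (ZMod p) (ZMod p) ℂ)ˣ)
    (hA' : (A' : Matrix (ZMod p) (ZMod p) ℂ) = fun r s => if r = s + 1 then c else 0)
    (hB' : (B' : Matrix (ZMod p) (ZMod p) ℂ) = fun r s => if r = s then c * ω ^ s.val else 0)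
    (m : ℤ → ℤ → Set (Matrix (ZMod p) (ZMod p) ℂ))
    (hm : ∀ k l : ℤ, m k l = {X | Xᴴ = -X ∧ X.trace = 0 ∧
      ∃ a b : ℂ, X = a • ((A' ^ k * B' ^ l :
            (Matrix (ZMod p) (ZMod p) ℂ)ˣ) : Matrix (ZMod p) (ZMod p) ℂ)
        + b • ((A' ^ (-k) * B' ^ (-l) :
            (Matrix (ZMod p) (ZMod p) ℂ)ˣ) : Matrix (ZMod p) (ZMod p) ℂ)}) :
    ∀ k l k' l' : ℤ,
      ¬((k : ZMod p) = 0 ∧ (l : ZMod p) = 0) →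
      ¬((k' : ZMod p) = 0 ∧ (l' : ZMod p) = 0) →
      ((∀ X ∈ m k l, ∀ Y ∈ m k' l', X * Y - Y * X = 0)
        ↔ ((k * l' : ℤ) : ZMod p) = ((k' * l : ℤ) : ZMod p)) := by
  intro k l k' l' hkl hkl'
  have hc0 : c ≠ 0 := hc ▸ zpow_ne_zero _ Complex.I_ne_zero
  have hA : (A' : Matrix (ZMod p) (ZMod p) ℂ) = c • weyl 1 0 := by
    rw [hA']; ext r s; simp [weyl_apply]
  have hB : (B' : Matrix (ZMod p) (ZMod p) ℂ) = c • weyl 0 1 := by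
    rw [hB', hω]; ext r s; simp [weyl_apply, stdAddChar_eq_pow_val]
  have hm' (k l : ℤ) :
      m k l = skewTracelessSpan (weyl (k : ZMod p) l) (weyl (-k : ZMod p) (-l)) := by
    rw [hm, ← skewTracelessSpan_smul (zpow_ne_zero (k + l) hc0) (zpow_ne_zero (-k + -l) hc0),
      ← val_zpow_mul_zpow_eq_weyl hc0 hA hB, ← Int.cast_neg, ← Int.cast_neg,
      ← val_zpow_mul_zpow_eq_weyl hc0 hA hB]
    rfl
  simp_rw [hm', sub_eq_zero, ← commute_iff_eq]
  push_cast
  exact forall_commute_skewTracelessSpan_weyl_iff hkl hkl'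

/-- For `p` prime, `[m_{(k,l)}, m_{(k′,l′)}] = 0` if and only if
`k l′ ≡ k′ l (mod p)`, i.e. iff `(k,l)` and `(k′,l′)` are proportional over `ℤ/p`. -/
theorem stmt_11 (p : ℕ) (hp : p.Prime) [NeZero p]
    (ω c : ℂ)
    (hω : ω = Complex.exp (2 * Real.pi * Complex.I / p))
    (hc : c = Complex.I ^ ((1 : ℤ) - (p : ℤ) ^ 2))
    (A' B' : (Matrix (ZMod p) (ZMod p) ℂ)ˣ)
    (hA' : (A' : Matrix (ZMod p) (ZMod p) ℂ) = fun r s => if r = s + 1 then c else 0)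
    (hB' : (B' : Matrix (ZMod p) (ZMod p) ℂ) = fun r s => if r = s then c * ω ^ s.val else 0)
    (m : ℤ → ℤ → Set (Matrix (ZMod p) (ZMod p) ℂ))
    (hm : ∀ k l : ℤ, m k l = {X | Xᴴ = -X ∧ X.trace = 0 ∧
      ∃ a b : ℂ, X = a • ((A' ^ k * B' ^ l :
            (Matrix (ZMod p) (ZMod p) ℂ)ˣ) : Matrix (ZMod p) (ZMod p) ℂ)
        + b • ((A' ^ (-k) * B' ^ (-l) :
            (Matrix (ZMod p) (ZMod p) ℂ)ˣ) : Matrix (ZMod p) (ZMod p) ℂ)}) :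
    ∀ k l k' l' : ℤ,
      ¬((k : ZMod p) = 0 ∧ (l : ZMod p) = 0) →
      ¬((k' : ZMod p) = 0 ∧ (l' : ZMod p) = 0) →
      ((∀ X ∈ m k l, ∀ Y ∈ m k' l', X * Y - Y * X = 0)
        ↔ ((k * l' : ℤ) : ZMod p) = ((k' * l : ℤ) : ZMod p)) :=
  stmt_11_general p ω c hω hc A' B' hA' hB' m hm
end

section
/- For each d with 3 ≤ d ≤ 6, let V_d ⊂ ℤ^d be the set of integer vectors e_i + e_j − e_k with 1 ≤ i, j, k ≤ d, i ≠ k, j ≠ k, and one of i + j = k, i = j + k, j = i + k. Then the additive subgroup L of ℤ^d generated by V_d has index 2 in ℤ^d. -/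
/-- The vertex set (as integer vectors) of the moment polytope of the Kähler
homogeneous space with `b₂ = 1` and `d` isotropy summands. -/
def kahlerVerticesZ (d : ℕ) : Set (Fin d → ℤ) :=
  {x | ∃ i j k : Fin d, k ≠ i ∧ k ≠ j ∧
    ((i.val + 1) + (j.val + 1) = k.val + 1 ∨
      i.val + 1 = (j.val + 1) + (k.val + 1) ∨
      j.val + 1 = (i.val + 1) + (k.val + 1)) ∧
    x = Pi.single i (1 : ℤ) + Pi.single j (1 : ℤ) - Pi.single k (1 : ℤ)}

/-!
Give the coordinate `i : Fin d` the weight `i + 1`. A vertex `e_a + e_b - e_c` with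
`a + b = c`, `a = b + c` or `b = a + c` has weight `a + b - c ∈ {0, 2b, 2a}`, which is even,
so `L` lies in the kernel of the weight modulo `2`, a subgroup of index `2`. Conversely the
vertices `e_1 + e_{n-1} - e_n` give `e_n ≡ n e_1 (mod L)` for every `n`, and for `d ≥ 3`
the vertices `e_1 + e_2 - e_3` and `e_3 + e_1 - e_2` add up to `2 e_1`. Hence modulo `L`
every `x` is congruent to its weight times `e_1`, which vanishes when the weight is even.
-/

variable {d : ℕ}

def weightedSum (d : ℕ) : (Fin d → ℤ) →+ ℤ where
  toFun x := ∑ i : Fin d, ((i : ℤ) + 1) * x i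
  map_zero' := by simp
  map_add' x y := by simp [mul_add, Finset.sum_add_distrib]

def weightParity (d : ℕ) : (Fin d → ℤ) →+ ZMod 2 :=
  (Int.castAddHom (ZMod 2)).comp (weightedSum d)

theorem weightedSum_single (i : Fin d) (c : ℤ) :
    weightedSum d (Pi.single i c) = ((i : ℤ) + 1) * c := by
  simp [weightedSum, Pi.single_apply]

theorem AddMonoidHom.map_eq_weightedSum_smul [NeZero d] {G : Type*} [AddCommGroup G]
    (π : (Fin d → ℤ) →+ G)
    (hπ : ∀ i : Fin d, π (Pi.single i 1) = ((i : ℤ) + 1) • π (Pi.single 0 1))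
    (x : Fin d → ℤ) : π x = weightedSum d x • π (Pi.single 0 1) :=
  calc π x = π (∑ i, x i • Pi.single i 1) := by rw [← pi_eq_sum_univ']
    _ = ∑ i, (x i * ((i : ℤ) + 1)) • π (Pi.single 0 1) := by
      rw [map_sum]
      refine Finset.sum_congr rfl fun i _ ↦ ?_
      rw [map_zsmul, hπ, smul_smul]
    _ = weightedSum d x • π (Pi.single 0 1) := by
      rw [← Finset.sum_smul]
      simp [weightedSum, mul_comm]

theorem mem_ker_weightParity {x : Fin d → ℤ} :
    x ∈ (weightParity d).ker ↔ Even (weightedSum d x) := by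
  simp [weightParity, ZMod.intCast_eq_zero_iff_even]

theorem even_weightedSum_of_mem_kahlerVerticesZ {x : Fin d → ℤ} (hx : x ∈ kahlerVerticesZ d) :
    Even (weightedSum d x) := by
  obtain ⟨i, j, k, -, -, hrel, rfl⟩ := hx
  simp only [map_sub, map_add, weightedSum_single, mul_one]
  rcases hrel with h | h | h
  · exact ⟨0, by omega⟩
  · exact ⟨(j : ℤ) + 1, by omega⟩
  · exact ⟨(i : ℤ) + 1, by omega⟩

theorem closure_kahlerVerticesZ_le_ker_weightParity :
    AddSubgroup.closure (kahlerVerticesZ d) ≤ (weightParity d).ker :=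
  (AddSubgroup.closure_le _).2 fun _ hx ↦
    mem_ker_weightParity.2 (even_weightedSum_of_mem_kahlerVerticesZ hx)

theorem index_ker_weightParity [NeZero d] : (weightParity d).ker.index = 2 := by
  have hsurj : Function.Surjective (weightParity d) := fun z ↦
    ⟨Pi.single 0 (z.val : ℤ), by simp [weightParity, weightedSum_single]⟩
  rw [AddSubgroup.index_ker, AddMonoidHom.range_eq_top.2 hsurj, AddSubgroup.card_top,
    Nat.card_zmod]

theorem single_sub_smul_single_zero_mem_closure [NeZero d] (n : ℕ) (hn : n < d) :
    Pi.single (⟨n, hn⟩ : Fin d) (1 : ℤ) - ((n : ℤ) + 1) • Pi.single 0 1 ∈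
      AddSubgroup.closure (kahlerVerticesZ d) := by
  induction n with
  | zero => simp
  | succ n ih =>
    have hvertex : Pi.single 0 1 + Pi.single ⟨n, by omega⟩ 1 - Pi.single ⟨n + 1, hn⟩ 1 ∈
        AddSubgroup.closure (kahlerVerticesZ d) :=
      AddSubgroup.subset_closure ⟨0, ⟨n, by omega⟩, ⟨n + 1, hn⟩, by simp [Fin.ext_iff],
        by simp [Fin.ext_iff], Or.inl (by simp; omega), rfl⟩
    convert sub_mem (ih (by omega)) hvertex using 1
    push_cast
    module

theorem two_smul_single_zero_mem_closure [NeZero d] (h3 : 3 ≤ d) :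
    (2 : ℤ) • Pi.single 0 1 ∈ AddSubgroup.closure (kahlerVerticesZ d) := by
  let e (n : ℕ) (hn : n < d) : Fin d → ℤ := Pi.single ⟨n, hn⟩ 1
  have h₁ : e 0 (by omega) + e 1 (by omega) - e 2 (by omega) ∈
      AddSubgroup.closure (kahlerVerticesZ d) :=
    AddSubgroup.subset_closure
      ⟨_, _, _, by simp [Fin.ext_iff], by simp [Fin.ext_iff], by simp, rfl⟩
  have h₂ : e 2 (by omega) + e 0 (by omega) - e 1 (by omega) ∈
      AddSubgroup.closure (kahlerVerticesZ d) :=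
    AddSubgroup.subset_closure
      ⟨_, _, _, by simp [Fin.ext_iff], by simp [Fin.ext_iff], by simp, rfl⟩
  convert add_mem h₁ h₂ using 1
  simp only [e]
  abel

theorem ker_weightParity_le_closure_kahlerVerticesZ (h3 : 3 ≤ d) :
    (weightParity d).ker ≤ AddSubgroup.closure (kahlerVerticesZ d) := by
  have : NeZero d := ⟨by omega⟩
  intro x hx
  obtain ⟨m, hm⟩ := mem_ker_weightParity.1 hx
  rw [← QuotientAddGroup.eq_zero_iff]
  set π := QuotientAddGroup.mk' (AddSubgroup.closure (kahlerVerticesZ d))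
  have hsingle (i : Fin d) : π (Pi.single i 1) = ((i : ℤ) + 1) • π (Pi.single 0 1) := by
    rw [← map_zsmul, ← sub_eq_zero, ← map_sub, QuotientAddGroup.mk'_apply,
      QuotientAddGroup.eq_zero_iff]
    exact single_sub_smul_single_zero_mem_closure i i.isLt
  have htwo : π ((2 : ℤ) • Pi.single 0 1) = 0 :=
    (QuotientAddGroup.eq_zero_iff _).2 (two_smul_single_zero_mem_closure h3)
  calc π x = weightedSum d x • π (Pi.single 0 1) := π.map_eq_weightedSum_smul hsingle x
    _ = m • π ((2 : ℤ) • Pi.single 0 1) := by rw [hm, map_zsmul, smul_smul, mul_two]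
    _ = 0 := by rw [htwo, smul_zero]

theorem closure_kahlerVerticesZ_eq_ker_weightParity (h3 : 3 ≤ d) :
    AddSubgroup.closure (kahlerVerticesZ d) = (weightParity d).ker :=
  le_antisymm closure_kahlerVerticesZ_le_ker_weightParity
    (ker_weightParity_le_closure_kahlerVerticesZ h3)

theorem stmt_16_general (d : ℕ) (h3 : 3 ≤ d) :
    (AddSubgroup.closure (kahlerVerticesZ d)).index = 2 := by
  have : NeZero d := ⟨by omega⟩
  rw [closure_kahlerVerticesZ_eq_ker_weightParity h3, index_ker_weightParity]

/-- For `3 ≤ d ≤ 6`, the subgroup of `ℤ^d` generated by the vertices of the moment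
polytope has index `2`. -/
theorem stmt_16 (d : ℕ) (h3 : 3 ≤ d) (h6 : d ≤ 6) :
    (AddSubgroup.closure (kahlerVerticesZ d)).index = 2 :=
  stmt_16_general d h3
end

section
/- Let F ∈ ℂ[X_1, X_2, X_3, X_4, X_5] be the polynomial F = 2·X_1³X_3 + 3·X_1²X_2X_4 + 6·X_1X_3²X_5 + 9·X_2X_3X_4X_5. Then there exists a point x ∈ ℂ^5 with all coordinates nonzero such that F(x) = 0 and all five partial derivatives ∂F/∂X_i vanish at x; that is, the complex hypersurface F = 0 has a singular point on the torus (ℂ∖{0})^5. -/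
open MvPolynomial

theorem MvPolynomial.pderiv_ofNat {R σ : Type*} [CommSemiring R] (i : σ) (n : ℕ)
    [n.AtLeastTwo] : pderiv i (ofNat(n) : MvPolynomial σ R) = 0 := by
  rw [← map_ofNat C n, pderiv_C]

/- `F` is quasi-homogeneous for the 3-dimensional torus acting by
`t • x = (t₁x₁, t₂x₂, t₃x₃, t₁t₂⁻¹t₃x₄, t₁²t₃⁻¹x₅)`, which is transitive on the first three
coordinates, so a singular point may be sought with `x₁ = x₂ = x₃ = 1`; then
`∂F/∂X₅ = 6 + 9x₄` and `∂F/∂X₂ = 3x₄(1 + 3x₅)` force `x₄ = -2/3`, `x₅ = -1/3`. -/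
/-- The hypersurface `2X₁³X₃ + 3X₁²X₂X₄ + 6X₁X₃²X₅ + 9X₂X₃X₄X₅ = 0` has a singular
point on the torus `(ℂ∖{0})⁵`. -/
theorem stmt_19 (F : MvPolynomial (Fin 5) ℂ)
    (hF : F = 2 * X 0 ^ 3 * X 2 + 3 * X 0 ^ 2 * X 1 * X 3
      + 6 * X 0 * X 2 ^ 2 * X 4 + 9 * X 1 * X 2 * X 3 * X 4) :
    ∃ x : Fin 5 → ℂ, (∀ i, x i ≠ 0) ∧
      eval x F = 0 ∧ ∀ i : Fin 5, eval x (pderiv i F) = 0 := by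
  subst hF
  refine ⟨![1, 1, 1, -2 / 3, -1 / 3], ?_, ?_, ?_⟩
  · intro i
    fin_cases i <;> norm_num
  · simp only [map_add, map_mul, map_pow, eval_ofNat, eval_X, Matrix.cons_val]
    norm_num
  · intro i
    fin_cases i <;> simp [pderiv_X, pderiv_ofNat, Fin.ext_iff] <;> norm_num
end
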